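/- arXiv:2211.11102 — 2 statements merged into one kernel-verified Lean document; each statement's English description precedes it below -/
import Mathlib

section
/- Let (G_{ij}, p_{ij}, h_{ij}) be a direct sequence of towers of groups in which every G_{ij} is a countable abelian group and every vertical bonding homomorphism p_{ij} : G_{i+1,j} → G_{ij} is injective. For each j let Γ_j = lim¹_i G_{ij}, the cokernel of the homomorphism d_j : ∏_i G_{ij} → ∏_i G_{ij} defined by d_j(g)_i = g_i − p_{ij}(g_{i+1}); the horizontal maps induce homomorphisms Γ_j → Γ_{j+1}, with composites Γ_j → Γ_k for j ≤ k. Suppose that for every j and every γ ∈ Γ_j there exists k ≥ j such that the composite homomorphism Γ_j → Γ_k sends γ to 0. Then for each j there exists k > j such that the composite homomorphism Γ_j → Γ_k is the zero homomorphism. -/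
/-!
Give every `G i j` the discrete topology, so that `∏ᵢ G i j` is a completely metrizable group.
For fixed `k` and `a ∈ G 0 (j + k)`, the families whose image at stage `j + k` equals `d c` for
some `c` with `c 0 = a` form a closed set: by injectivity of the `p`'s, `c` is determined by `a`,
so solutions on finite initial segments glue. Since `G 0 (j + k)` is countable, these countably
many closed sets cover the product, and by Baire one of them has interior. Hence the subgroup of
families killed at stage `j + k` is open, thus closed; it contains the dense subgroup of
finitely supported families, so it is everything. One more horizontal step makes `k` positive.
-/

/-- The composite homomorphism `G_{i,j} → G_{i,j+k}` of the horizontal maps of a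
direct sequence of towers of abelian groups (the identity when `k = 0`). -/
def hIter (G : ℕ → ℕ → Type*) [∀ i j, AddCommGroup (G i j)]
    (h : ∀ i j, G i j →+ G i (j + 1)) (i j : ℕ) : ∀ k, G i j →+ G i (j + k)
  | 0 => AddMonoidHom.id _
  | k + 1 => (h i (j + k)).comp (hIter G h i j k)

open Filter

theorem AddSubgroup.exists_eq_top_of_iUnion_isClosed {X ι : Type*} [AddGroup X]
    [TopologicalSpace X] [SeparatelyContinuousAdd X] [BaireSpace X] [Countable ι]
    (A : ι → AddSubgroup X) (hA : ∀ m, Dense (A m : Set X)) (S : ι → Set X)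
    (hS : ∀ m, IsClosed (S m)) (hSA : ∀ m, S m ⊆ A m) (hcover : ⋃ m, S m = Set.univ) :
    ∃ m, A m = ⊤ := by
  obtain ⟨m, g, hg⟩ := nonempty_interior_of_iUnion_of_closed hS hcover
  have hopen : IsOpen (A m : Set X) :=
    (A m).isOpen_of_mem_nhds (mem_of_superset (mem_interior_iff_mem_nhds.1 hg) (hSA m))
  refine ⟨m, AddSubgroup.coe_eq_univ.1 ?_⟩
  rw [← ((A m).isClosed_of_isOpen hopen).closure_eq, (hA m).closure_eq]

theorem dense_setOf_eventually_eq_zero {E : ℕ → Type*} [∀ i, Zero (E i)]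
    [∀ i, TopologicalSpace (E i)] [∀ i, DiscreteTopology (E i)] :
    Dense {x : ∀ i, E i | ∃ N, ∀ i, N ≤ i → x i = 0} := by
  intro x
  refine mem_closure_of_tendsto (f := fun N i => if i < N then x i else 0) (b := atTop)
    (tendsto_pi_nhds.2 fun i => tendsto_atTop_of_eventually_const (i₀ := i + 1)
      fun N hN => if_pos (by omega)) (Eventually.of_forall fun N => ⟨N, fun i hi => ?_⟩)
  exact if_neg (by omega)

namespace Tower

section

variable {E F : ℕ → Type*} [∀ i, AddCommGroup (E i)] [∀ i, AddCommGroup (F i)]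

/-- `lim¹` of the tower `(E, q)` is the cokernel of `diff q`. -/
def diff (q : ∀ i, E (i + 1) →+ E i) : (∀ i, E i) →+ (∀ i, E i) where
  toFun c i := c i - q i (c (i + 1))
  map_zero' := by ext; simp
  map_add' c c' := by ext; simp only [Pi.add_apply, map_add]; abel

variable (q : ∀ i, E (i + 1) →+ E i)

@[simp]
theorem diff_apply (c : ∀ i, E i) (i : ℕ) : diff q c i = c i - q i (c (i + 1)) := rfl

theorem mem_range_diff_iff {y : ∀ i, E i} :
    y ∈ (diff q).range ↔ ∃ c : ∀ i, E i, ∀ i, y i = c i - q i (c (i + 1)) := by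
  simp only [AddMonoidHom.mem_range, funext_iff, diff_apply, eq_comm]

theorem map_diff (r : ∀ i, F (i + 1) →+ F i) (φ : ∀ i, E i →+ F i)
    (hφ : ∀ i x, φ i (q i x) = r i (φ (i + 1) x)) (c : ∀ i, E i) :
    AddMonoidHom.piMap φ (diff q c) = diff r (AddMonoidHom.piMap φ c) := by
  ext i
  simp [hφ]

theorem mem_range_diff_of_eventually_eq_zero {y : ∀ i, E i} (N : ℕ)
    (hy : ∀ i, N ≤ i → y i = 0) : y ∈ (diff q).range := by
  induction N generalizing E with
  | zero =>
    obtain rfl : y = 0 := funext fun i => hy i i.zero_le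
    exact zero_mem _
  | succ N ih =>
    obtain ⟨c, hc⟩ := ih (fun i => q (i + 1)) (y := fun i => y (i + 1)) fun i hi => hy _ (by omega)
    refine ⟨fun | 0 => y 0 + q 0 (c 0) | i + 1 => c i, funext fun | 0 => ?_ | i + 1 => ?_⟩
    · simp
    · exact congrFun hc i

variable {q}

theorem eq_of_diff_eq_of_lt (hq : ∀ i, Function.Injective (q i)) {c c' : ∀ i, E i}
    (h0 : c 0 = c' 0) {n : ℕ} (h : ∀ i < n, diff q c i = diff q c' i) :
    ∀ i ≤ n, c i = c' i
  | 0, _ => h0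
  | i + 1, hi => hq i <| by
    have := h i (by omega)
    rw [diff_apply, diff_apply, eq_of_diff_eq_of_lt hq h0 h i (by omega)] at this
    exact sub_right_injective this

/-- Solutions of `d(c) = y` on ever longer initial segments with fixed `c 0` are unique where they
overlap, so they glue to a solution. -/
theorem exists_diff_eq_of_forall_lt (hq : ∀ i, Function.Injective (q i)) {a : E 0}
    {y : ∀ i, E i} (h : ∀ n, ∃ c : ∀ i, E i, c 0 = a ∧ ∀ i < n, diff q c i = y i) :
    ∃ c : ∀ i, E i, c 0 = a ∧ diff q c = y := by
  choose c hc0 hc using h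
  have hcoh : ∀ n i, i + 1 ≤ n → c n i = c (i + 1) i := fun n i hi =>
    eq_of_diff_eq_of_lt hq ((hc0 n).trans (hc0 (i + 1)).symm)
      (fun l hl => (hc n l (by omega)).trans (hc (i + 1) l hl).symm) i i.le_succ
  refine ⟨fun i => c (i + 1) i, hc0 1, funext fun i => ?_⟩
  rw [diff_apply, ← hcoh (i + 2) i (by omega), ← hcoh (i + 2) (i + 1) le_rfl]
  exact hc (i + 2) i (by omega)

theorem isClosed_image_diff [∀ i, TopologicalSpace (E i)] [∀ i, DiscreteTopology (E i)]
    (hq : ∀ i, Function.Injective (q i)) (a : E 0) :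
    IsClosed (diff q '' {c | c 0 = a}) := by
  refine isClosed_of_closure_subset fun y hy => ?_
  refine exists_diff_eq_of_forall_lt hq fun n => ?_
  obtain ⟨_, hz, c, hc0, rfl⟩ := mem_closure_iff_nhds.1 hy _
    (set_pi_mem_nhds (Set.finite_Iio n) fun i _ => mem_nhds_discrete.2 (Set.mem_singleton (y i)))
  exact ⟨c, hc0, fun i hi => hz i hi⟩

end

theorem exists_forall_mem_range_diff {E : ℕ → Type*} {F : ℕ → ℕ → Type*}
    [∀ i, AddCommGroup (E i)] [∀ k i, AddCommGroup (F k i)] [∀ k, Countable (F k 0)]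
    (q : ∀ k i, F k (i + 1) →+ F k i) (hq : ∀ k i, Function.Injective (q k i))
    (f : ∀ k i, E i →+ F k i)
    (hf : ∀ x, ∃ k, AddMonoidHom.piMap (f k) x ∈ (diff (q k)).range) :
    ∃ k, ∀ x, AddMonoidHom.piMap (f k) x ∈ (diff (q k)).range := by
  let _ : ∀ i, TopologicalSpace (E i) := fun _ => ⊥
  let _ : ∀ k i, TopologicalSpace (F k i) := fun _ _ => ⊥
  have _ : ∀ i, DiscreteTopology (E i) := fun _ => ⟨rfl⟩
  have _ : ∀ k i, DiscreteTopology (F k i) := fun _ _ => ⟨rfl⟩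
  have hcont : ∀ k, Continuous (AddMonoidHom.piMap (f k)) := fun k =>
    continuous_pi fun i => continuous_of_discreteTopology.comp (continuous_apply i)
  obtain ⟨⟨k, _⟩, hk⟩ := AddSubgroup.exists_eq_top_of_iUnion_isClosed
    (fun m : Σ k, F k 0 => (diff (q m.1)).range.comap (AddMonoidHom.piMap (f m.1)))
    (fun m => dense_setOf_eventually_eq_zero.mono fun x hx => by
      obtain ⟨N, hx⟩ := hx
      exact mem_range_diff_of_eventually_eq_zero _ N fun i hi => by simp [hx i hi])
    (fun m => AddMonoidHom.piMap (f m.1) ⁻¹' (diff (q m.1) '' {c | c 0 = m.2}))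
    (fun m => (isClosed_image_diff (hq m.1) m.2).preimage (hcont m.1))
    (fun m x ⟨c, _, hc⟩ => ⟨c, hc⟩)
    (Set.eq_univ_of_forall fun x => by
      obtain ⟨k, c, hc⟩ := hf x
      exact Set.mem_iUnion.2 ⟨⟨k, c 0⟩, c, rfl, hc⟩)
  exact ⟨k, (AddSubgroup.eq_top_iff' _).1 hk⟩

end Tower

/-- Proposition (the injective case of Theorem A(c)): for a direct sequence of towers
of countable abelian groups with injective vertical bonding maps, set
`Γ_j = lim¹_i G_{ij}`, the cokernel of `d_j(g)_i = g_i − p_{ij}(g_{i+1})`; elements of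
`Γ_j` are classes of families `g : ∀ i, G i j`, and the image of such a class in
`Γ_{j+k}` vanishes iff the coordinatewise horizontal image of `g` lies in the range of
`d_{j+k}`.  If the colimit of the `Γ_j` is trivial, then for each `j` there is `k > j`
such that the composite homomorphism `Γ_j → Γ_k` is the zero homomorphism. -/
theorem stmt_10 (G : ℕ → ℕ → Type*) [∀ i j, AddCommGroup (G i j)]
    [∀ i j, Countable (G i j)]
    (p : ∀ i j, G (i + 1) j →+ G i j) (h : ∀ i j, G i j →+ G i (j + 1))
    (hinj : ∀ i j, Function.Injective (p i j))
    (hcomm : ∀ i j (g : G (i + 1) j), h i j (p i j g) = p i (j + 1) (h (i + 1) j g))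
    (htriv : ∀ j (g : ∀ i, G i j), ∃ k, ∃ c : ∀ i, G i (j + k),
      ∀ i, hIter G h i j k (g i) = c i - p i (j + k) (c (i + 1))) :
    ∀ j, ∃ k, 0 < k ∧ ∀ g : ∀ i, G i j, ∃ c : ∀ i, G i (j + k),
      ∀ i, hIter G h i j k (g i) = c i - p i (j + k) (c (i + 1)) := by
  intro j
  obtain ⟨k, hk⟩ := Tower.exists_forall_mem_range_diff (E := fun i => G i j)
    (F := fun k i => G i (j + k)) (fun k i => p i (j + k)) (fun k i => hinj i (j + k))
    (fun k i => hIter G h i j k)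
    fun g => (htriv j g).imp fun k hk => (Tower.mem_range_diff_iff _).2 hk
  refine ⟨k + 1, k.succ_pos, fun g => (Tower.mem_range_diff_iff _).1 ?_⟩
  obtain ⟨c, hc⟩ := hk g
  refine ⟨AddMonoidHom.piMap (fun i => h i (j + k)) c, ?_⟩
  rw [← Tower.map_diff _ _ _ (fun i x => hcomm i (j + k) x), hc]
  rfl
end

section
/- Let (G_{ij}, p_{ij}, h_{ij}) be a direct sequence of towers of groups in which every G_{ij} is a countable abelian group. For each j let Γ_j = lim¹_i G_{ij}, the cokernel of the homomorphism d_j : ∏_i G_{ij} → ∏_i G_{ij} defined by d_j(g)_i = g_i − p_{ij}(g_{i+1}); the horizontal maps induce homomorphisms Γ_j → Γ_{j+1}, with composites Γ_j → Γ_k for j ≤ k. Suppose each induced homomorphism Γ_j → Γ_{j+1} is surjective, and that for every j and every γ ∈ Γ_j there exists k ≥ j such that the composite homomorphism Γ_j → Γ_k sends γ to 0. Then for each j there exists k > j such that the composite homomorphism Γ_j → Γ_k is the zero homomorphism. -/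
open Set Filter Topology MeasureTheory PiNat

section Tower

variable {A : ℕ → Type*} [∀ i, AddCommGroup (A i)]

def towerBoundary (P : ∀ i, A (i + 1) →+ A i) : (∀ i, A i) →+ ∀ i, A i :=
  AddMonoidHom.id _ - AddMonoidHom.pi fun i => (P i).comp (Pi.evalAddMonoidHom A (i + 1))

@[simp]
theorem towerBoundary_apply (P : ∀ i, A (i + 1) →+ A i) (c : ∀ i, A i) (i : ℕ) :
    towerBoundary P c i = c i - P i (c (i + 1)) :=
  rfl

theorem exists_towerBoundary_eq_of_lt (P : ∀ i, A (i + 1) →+ A i) (N : ℕ) (g : ∀ i, A i) :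
    ∃ c, ∀ i < N, towerBoundary P c i = g i := by
  induction N generalizing A with
  | zero => exact ⟨0, fun i hi => absurd hi (Nat.not_lt_zero i)⟩
  | succ N ih =>
    obtain ⟨c, hc⟩ := ih (fun i => P (i + 1)) (fun i => g (i + 1))
    refine ⟨fun | 0 => g 0 + P 0 (c 0) | i + 1 => c i, fun | 0, _ => ?_ | i + 1, hi => ?_⟩
    · simp
    · exact hc i (by omega)

theorem eq_top_of_range_towerBoundary_le {P : ∀ i, A (i + 1) →+ A i}
    {H : AddSubgroup (∀ i, A i)} (hd : (towerBoundary P).range ≤ H) {N : ℕ}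
    (hN : cylinder 0 N ⊆ (H : Set (∀ i, A i))) : H = ⊤ := by
  refine (AddSubgroup.eq_top_iff' H).2 fun g => ?_
  obtain ⟨c, hc⟩ := exists_towerBoundary_eq_of_lt P N g
  have : g - towerBoundary P c ∈ H := hN fun i hi => by simp [hc i hi]
  simpa using H.add_mem this (hd ⟨c, rfl⟩)

theorem range_towerBoundary_le_comap_piMap {B : ℕ → Type*} [∀ i, AddCommGroup (B i)]
    {P : ∀ i, A (i + 1) →+ A i} {Q : ∀ i, B (i + 1) →+ B i} (f : ∀ i, A i →+ B i)
    (hf : ∀ i x, f i (P i x) = Q i (f (i + 1) x)) :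
    (towerBoundary P).range ≤ (towerBoundary Q).range.comap (AddMonoidHom.piMap f) := by
  rintro _ ⟨c, rfl⟩
  exact ⟨AddMonoidHom.piMap f c, funext fun i => by simp [hf]⟩

theorem continuous_towerBoundary [∀ i, TopologicalSpace (A i)] [∀ i, DiscreteTopology (A i)]
    (P : ∀ i, A (i + 1) →+ A i) : Continuous (towerBoundary P) :=
  continuous_pi fun i =>
    (continuous_apply i).sub (continuous_of_discreteTopology.comp (continuous_apply (i + 1)))

end Tower

namespace PiNat

theorem exists_cylinder_subset_of_mem_nhds {E : ℕ → Type*} [∀ n, TopologicalSpace (E n)]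
    [∀ n, DiscreteTopology (E n)] {x : ∀ n, E n} {s : Set (∀ n, E n)} (hs : s ∈ 𝓝 x) :
    ∃ n, cylinder x n ⊆ s := by
  obtain ⟨_, ⟨y, n, rfl⟩, hx, hsub⟩ := (isTopologicalBasis_cylinders E).mem_nhds_iff.1 hs
  exact ⟨n, (mem_cylinder_iff_eq.1 hx).symm ▸ hsub⟩

theorem eq_of_forall_mem_closure_image_cylinder {E : ℕ → Type*} [∀ n, TopologicalSpace (E n)]
    [∀ n, DiscreteTopology (E n)] {X : Type*} [TopologicalSpace X] [T2Space X]
    {f : (∀ n, E n) → X} (hf : Continuous f) {c : ∀ n, E n} {x : X}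
    (hx : ∀ n, x ∈ closure (f '' cylinder c n)) : x = f c := by
  by_contra hne
  obtain ⟨U, V, hU, hV, hcU, hxV, hUV⟩ := t2_separation (Ne.symm hne)
  obtain ⟨n, hn⟩ :=
    exists_cylinder_subset_of_mem_nhds (hf.continuousAt.preimage_mem_nhds (hU.mem_nhds hcU))
  have : closure (f '' cylinder c n) ⊆ Vᶜ :=
    closure_minimal ((image_subset_iff.2 hn).trans hUV.subset_compl_right) hV.isClosed_compl
  exact this (hx n) hxV

theorem exists_forall_res_of_forall_exists_cons {α : Type*} (P : List α → Prop) (h₀ : P [])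
    (hstep : ∀ l, P l → ∃ a, P (a :: l)) : ∃ c : ℕ → α, ∀ n, P (res c n) := by
  classical
  obtain ⟨a₀, -⟩ := hstep [] h₀
  choose g hg using fun l => if hl : P l then (hstep l hl).imp fun _ h _ => h
    else ⟨a₀, fun h => absurd h hl⟩
  let L : ℕ → List α := fun n => Nat.rec [] (fun _ l => g l :: l) n
  have hL : ∀ n, P (L n) := fun n => Nat.rec h₀ (fun _ ih => hg _ ih) n
  have hres : ∀ n, res (fun n => g (L n)) n = L n := by
    intro n
    induction n with
    | zero => rfl
    | succ n ih => rw [res_succ, ih]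
  exact ⟨fun n => g (L n), fun n => hres n ▸ hL n⟩

end PiNat

section BaireProperty

variable {X : Type*} [TopologicalSpace X]

theorem isMeagre_diff_of_residualEq {s t : Set X} (h : s =ᶠ[residual X] t) :
    IsMeagre (s \ t) := by
  show (s \ t)ᶜ ∈ residual X
  filter_upwards [h.mem_iff] with x hx hxst using hxst.2 (hx.1 hxst.1)

theorem exists_baireMeasurableSet_hull [SecondCountableTopology X] (s : Set X) :
    ∃ t, s ⊆ t ∧ BaireMeasurableSet t ∧ ∀ u ⊆ t \ s, BaireMeasurableSet u → IsMeagre u := by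
  set D := {x | ∀ U ∈ 𝓝 x, ¬IsMeagre (s ∩ U)}
  have hD : IsClosed D := by
    refine isOpen_compl_iff.1 (isOpen_iff_mem_nhds.2 fun x hx => ?_)
    simp only [D, mem_compl_iff, mem_ofPred_eq, not_forall, not_not] at hx
    obtain ⟨U, hU, hsU⟩ := hx
    filter_upwards [eventually_mem_nhds_iff.2 hU] with y hy hyD using hyD U hy hsU
  have hsD : IsMeagre (s \ D) := by
    obtain ⟨b, hbc, -, hb⟩ := TopologicalSpace.exists_countable_basis X
    refine (isMeagre_biUnion (I := {t ∈ b | IsMeagre (s ∩ t)}) (hbc.mono (sep_subset _ _))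
      (f := fun t => s ∩ t) fun t ht => ht.2).mono ?_
    rintro x ⟨hxs, hxD⟩
    simp only [D, mem_ofPred_eq, not_forall, not_not] at hxD
    obtain ⟨U, hU, hsU⟩ := hxD
    obtain ⟨t, htb, hxt, htU⟩ := hb.mem_nhds_iff.1 hU
    exact mem_biUnion ⟨htb, hsU.mono (inter_subset_inter_right _ htU)⟩ ⟨hxs, hxt⟩
  refine ⟨s ∪ D, subset_union_left, ?_, fun u hu hum => ?_⟩
  · rw [union_comm, ← union_sdiff_self]
    exact hD.isOpen_compl.baireMeasurableSet.of_compl.union hsD.baireMeasurableSet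
  by_contra hnm
  obtain ⟨U, hUo, hU⟩ := hum.residualEq_isOpen
  obtain ⟨x, hxu, hxU⟩ : (u ∩ U).Nonempty := by
    by_contra! h
    refine hnm ((isMeagre_diff_of_residualEq hU).mono ?_)
    exact fun y hy => ⟨hy, fun hyU => h.subset ⟨hy, hyU⟩⟩
  have hxD : x ∈ D := (hu hxu).1.resolve_left (hu hxu).2
  refine hxD U (hUo.mem_nhds hxU) ((isMeagre_diff_of_residualEq hU.symm).mono ?_)
  exact fun y hy => ⟨hy.2, fun hyu => (hu hyu).2 hy.1⟩

end BaireProperty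

theorem MeasureTheory.AnalyticSet.baireMeasurableSet {X : Type*} [TopologicalSpace X]
    [SecondCountableTopology X] [T2Space X] {s : Set X} (hs : AnalyticSet s) :
    BaireMeasurableSet s := by
  rw [AnalyticSet] at hs
  rcases hs with rfl | ⟨f, hf, rfl⟩
  · exact isOpen_empty.baireMeasurableSet
  choose hull subset_hull hull_bm hull_meagre using exists_baireMeasurableSet_hull (X := X)
  -- `res c n = [c (n - 1), …, c 0]`, so `a :: l` prolongs the initial segment `l` by `a`.
  set A : List ℕ → Set X := fun l => f '' {c | res c l.length = l}
  set H : List ℕ → Set X := fun l => hull (A l) ∩ closure (A l)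
  have hAH : ∀ l, A l ⊆ H l := fun l => subset_inter (subset_hull _) subset_closure
  have hA : ∀ l, A l ⊆ ⋃ a, A (a :: l) := by
    rintro l _ ⟨c, hc, rfl⟩
    exact mem_iUnion.2 ⟨c l.length, c, by simp [res_succ, hc.out], rfl⟩
  have hH : ∀ l, BaireMeasurableSet (H l) := fun l =>
    (hull_bm _).inter isClosed_closure.isOpen_compl.baireMeasurableSet.of_compl
  set M := ⋃ l, (H l \ ⋃ a, H (a :: l))
  have hM : IsMeagre M := isMeagre_iUnion fun l =>
    hull_meagre _ _
      (fun x hx => ⟨hx.1.1, fun hxA => hx.2 (iUnion_mono (fun a => hAH _) (hA l hxA))⟩)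
      ((hH l).diff (.iUnion fun a => hH _))
  have hrange : range f ⊆ H [] := by
    simpa [A, res_zero, image_univ] using hAH []
  -- A point of `H []` outside `M` follows a branch `c` of the scheme, and then equals `f c`.
  have hbranch : H [] \ M ⊆ range f := by
    rintro x ⟨hx, hxM⟩
    obtain ⟨c, hc⟩ := exists_forall_res_of_forall_exists_cons (x ∈ H ·) hx fun l hl => by
      by_contra! h
      exact hxM (mem_iUnion.2 ⟨l, hl, by simpa using h⟩)
    refine ⟨c, (eq_of_forall_mem_closure_image_cylinder hf fun n => ?_).symm⟩
    simpa [H, A, cylinder_eq_res] using (hc n).2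
  have : range f = (H [] \ M) ∪ (range f ∩ M) := by
    refine Subset.antisymm (fun x hx => ?_) (union_subset hbranch inter_subset_left)
    by_cases hxM : x ∈ M
    · exact Or.inr ⟨hx, hxM⟩
    · exact Or.inl ⟨hrange hx, hxM⟩
  rw [this]
  exact ((hH _).diff hM.baireMeasurableSet).union (hM.mono inter_subset_right).baireMeasurableSet

section Pettis

variable {G : Type*} [Group G] [TopologicalSpace G] [IsTopologicalGroup G]

/-- Pettis: if `H =ᵇ U` with `U` open and `x ∈ U`, then for `w` near `1` the open set
`U ∩ U * w` is nonempty, so it meets `H ∩ H * w`, whence `w ∈ H⁻¹ * H = H`. -/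
@[to_additive]
theorem Subgroup.isOpen_of_baireMeasurableSet [BaireSpace G] {H : Subgroup G}
    (hm : BaireMeasurableSet (H : Set G)) (hH : ¬IsMeagre (H : Set G)) : IsOpen (H : Set G) := by
  obtain ⟨U, hUo, hHU⟩ := hm.residualEq_isOpen
  obtain rfl | ⟨x, hxU⟩ := U.eq_empty_or_nonempty
  · exact absurd (by simpa using isMeagre_diff_of_residualEq hHU) hH
  refine H.isOpen_of_mem_nhds (g := 1) ?_
  have hW : {w | x * w ∈ U} ∈ 𝓝 (1 : G) :=
    (continuous_const_mul x).continuousAt.preimage_mem_nhds (by simpa using hUo.mem_nhds hxU)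
  filter_upwards [hW] with w hw
  have hres : ∀ᶠ y in residual G, (y ∈ H ↔ y ∈ U) ∧ (y * w⁻¹ ∈ H ↔ y * w⁻¹ ∈ U) :=
    hHU.mem_iff.and ((tendsto_residual_of_isOpenMap (continuous_mul_const w⁻¹)
      (isOpenMap_mul_right w⁻¹)).eventually hHU.mem_iff)
  obtain ⟨y, ⟨hyU, hywU⟩, hyH, hywH⟩ := (dense_of_mem_residual hres).inter_open_nonempty _
    (hUo.inter (hUo.preimage (continuous_mul_const w⁻¹))) ⟨x * w, hw, by simpa using hxU⟩
  simpa using H.mul_mem (H.inv_mem (hywH.2 hywU)) (hyH.2 hyU)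

@[to_additive]
theorem Subgroup.exists_isOpen_of_forall_exists_mem [PolishSpace G] {ι : Type*} [Countable ι]
    {H : ι → Subgroup G} (hH : ∀ k, AnalyticSet (H k : Set G)) (hcover : ∀ x, ∃ k, x ∈ H k) :
    ∃ k, IsOpen (H k : Set G) := by
  obtain ⟨k, hk⟩ : ∃ k, ¬IsMeagre (H k : Set G) := by
    by_contra! h
    exact not_isMeagre_of_isOpen isOpen_univ univ_nonempty
      ((isMeagre_iUnion h).mono fun x _ => mem_iUnion.2 (hcover x))
  exact ⟨k, (H k).isOpen_of_baireMeasurableSet (hH k).baireMeasurableSet hk⟩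

end Pettis

section DirectSequence

variable (G : ℕ → ℕ → Type*) [∀ i j, AddCommGroup (G i j)]
  (p : ∀ i j, G (i + 1) j →+ G i j) (h : ∀ i j, G i j →+ G i (j + 1))

/-- The preimage in `∏ i, G i j` of the kernel of `lim¹_i G i j → lim¹_i G i (j + k)`. -/
def lim1KerPreimage (j k : ℕ) : AddSubgroup (∀ i, G i j) :=
  (towerBoundary (A := fun i => G i (j + k)) fun i => p i (j + k)).range.comap
    (AddMonoidHom.piMap fun i => hIter G h i j k)

variable {G p h}

theorem mem_lim1KerPreimage {j k : ℕ} {g : ∀ i, G i j} :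
    g ∈ lim1KerPreimage G p h j k ↔
      ∃ c : ∀ i, G i (j + k), ∀ i, hIter G h i j k (g i) = c i - p i (j + k) (c (i + 1)) := by
  simp [lim1KerPreimage, funext_iff, eq_comm]

theorem hIter_map
    (hcomm : ∀ i j (g : G (i + 1) j), h i j (p i j g) = p i (j + 1) (h (i + 1) j g))
    (i j k : ℕ) (y : G (i + 1) j) :
    hIter G h i j k (p i j y) = p i (j + k) (hIter G h (i + 1) j k y) := by
  induction k with
  | zero => rfl
  | succ k ih =>
    simp only [hIter, AddMonoidHom.comp_apply, ih, hcomm]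
    rfl

variable (hcomm : ∀ i j (g : G (i + 1) j), h i j (p i j g) = p i (j + 1) (h (i + 1) j g))
include hcomm

theorem range_towerBoundary_le_lim1KerPreimage (j k : ℕ) :
    (towerBoundary fun i => p i j).range ≤ lim1KerPreimage G p h j k :=
  range_towerBoundary_le_comap_piMap _ (hIter_map hcomm · j k)

theorem lim1KerPreimage_le_succ (j k : ℕ) :
    lim1KerPreimage G p h j k ≤ lim1KerPreimage G p h j (k + 1) := fun _ hg =>
  range_towerBoundary_le_comap_piMap (fun i => h i (j + k)) (hcomm · (j + k)) hg

theorem exists_lim1KerPreimage_eq_top [∀ i j, Countable (G i j)] (j : ℕ)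
    (hcover : ∀ g, ∃ k, g ∈ lim1KerPreimage G p h j k) :
    ∃ k, lim1KerPreimage G p h j k = ⊤ := by
  let _ : ∀ i j, TopologicalSpace (G i j) := fun _ _ => ⊥
  have _ : ∀ i j, DiscreteTopology (G i j) := fun _ _ => ⟨rfl⟩
  have hanalytic : ∀ k, AnalyticSet (lim1KerPreimage G p h j k : Set (∀ i, G i j)) := fun k =>
    (analyticSet_range_of_polishSpace (continuous_towerBoundary _)).preimage
      (continuous_pi fun i => continuous_of_discreteTopology.comp (continuous_apply i))
  obtain ⟨k, hk⟩ := AddSubgroup.exists_isOpen_of_forall_exists_mem hanalytic hcover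
  obtain ⟨N, hN⟩ := exists_cylinder_subset_of_mem_nhds (hk.mem_nhds (zero_mem _))
  exact ⟨k, eq_top_of_range_towerBoundary_le (range_towerBoundary_le_lim1KerPreimage hcomm j k) hN⟩

end DirectSequence

theorem stmt_11_general (G : ℕ → ℕ → Type*) [∀ i j, AddCommGroup (G i j)]
    [∀ i j, Countable (G i j)]
    (p : ∀ i j, G (i + 1) j →+ G i j) (h : ∀ i j, G i j →+ G i (j + 1))
    (hcomm : ∀ i j (g : G (i + 1) j), h i j (p i j g) = p i (j + 1) (h (i + 1) j g))
    (htriv : ∀ j (g : ∀ i, G i j), ∃ k, ∃ c : ∀ i, G i (j + k),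
      ∀ i, hIter G h i j k (g i) = c i - p i (j + k) (c (i + 1))) :
    ∀ j, ∃ k, 0 < k ∧ ∀ g : ∀ i, G i j, ∃ c : ∀ i, G i (j + k),
      ∀ i, hIter G h i j k (g i) = c i - p i (j + k) (c (i + 1)) := by
  intro j
  obtain ⟨k, hk⟩ := exists_lim1KerPreimage_eq_top hcomm j fun g =>
    (htriv j g).imp fun _ => mem_lim1KerPreimage.2
  refine ⟨k + 1, k.succ_pos, fun g => mem_lim1KerPreimage.1 ?_⟩
  exact lim1KerPreimage_le_succ hcomm j k (hk ▸ AddSubgroup.mem_top g)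

/-- Proposition (the surjective case of Theorem A(c)): for a direct sequence of towers
of countable abelian groups, set `Γ_j = lim¹_i G_{ij}`, the cokernel of
`d_j(g)_i = g_i − p_{ij}(g_{i+1})`; elements of `Γ_j` are classes of families
`g : ∀ i, G i j`.  Suppose each induced homomorphism `Γ_j → Γ_{j+1}` is surjective
(every family at level `j+1` agrees with the image of a family at level `j` modulo the
range of `d_{j+1}`).  If the colimit of the `Γ_j` is trivial, then for each `j` there
is `k > j` such that the composite homomorphism `Γ_j → Γ_k` is the zero
homomorphism. -/
theorem stmt_11 (G : ℕ → ℕ → Type*) [∀ i j, AddCommGroup (G i j)]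
    [∀ i j, Countable (G i j)]
    (p : ∀ i j, G (i + 1) j →+ G i j) (h : ∀ i j, G i j →+ G i (j + 1))
    (hcomm : ∀ i j (g : G (i + 1) j), h i j (p i j g) = p i (j + 1) (h (i + 1) j g))
    (hsurj : ∀ j (g : ∀ i, G i (j + 1)), ∃ g' : ∀ i, G i j, ∃ c : ∀ i, G i (j + 1),
      ∀ i, h i j (g' i) - g i = c i - p i (j + 1) (c (i + 1)))
    (htriv : ∀ j (g : ∀ i, G i j), ∃ k, ∃ c : ∀ i, G i (j + k),
      ∀ i, hIter G h i j k (g i) = c i - p i (j + k) (c (i + 1))) :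
    ∀ j, ∃ k, 0 < k ∧ ∀ g : ∀ i, G i j, ∃ c : ∀ i, G i (j + k),
      ∀ i, hIter G h i j k (g i) = c i - p i (j + k) (c (i + 1)) :=
  stmt_11_general G p h hcomm htriv
end
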